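/- Let m = 3 and suppose the speed profile V is convex and smooth, with outward normal n̂(ṽ) at each boundary point ṽ (i.e., (v − ṽ)·n̂(ṽ) ≤ 0 for every v in the enclosed body). Define V^r = {v ∈ V : v = θ_1 v_i + θ_2 v_j, θ_1, θ_2 ≥ 0} for each permutation (i,j,r). If (1) v_i·n̂(v_j) ≥ 0 for all i, j ∈ {1,2,3}, and (2) v_r·n̂(ṽ) ≥ 0 for every r ∈ {1,2,3} and every ṽ ∈ V^r, then V^r ⊂ Π^r = {θ_1 v_i + θ_2 v_j : θ_1, θ_2 ∈ [0,1]} and V_s ⊂ Ψ^r = {θ_1 v_r + θ_2 v : v ∈ V^r, θ_1 ≥ 0, θ_2 ∈ [0,1]} for all r; consequently the simplex (x = 0, z_1, z_2, z_3) is monotone causal. -/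
import Mathlib


open Finset
open scoped RealInnerProductSpace

/-- The semi-Lagrangian transition cost `C(ξ) = |x̃_ξ| / f(a_ξ)`, written as a
function of the waypoint `w = x̃_ξ`.  In particular `slCost f (z j) = C_j`. -/
noncomputable def slCost {E : Type*} [NormedAddCommGroup E] [InnerProductSpace ℝ E]
    (f : E → ℝ) (w : E) : ℝ := ‖w‖ / f (‖w‖⁻¹ • w)

/-- The velocity in the direction of `w`:  `slVel f (z j) = v_j`. -/
noncomputable def slVel {E : Type*} [NormedAddCommGroup E] [InnerProductSpace ℝ E]
    (f : E → ℝ) (w : E) : E := f (‖w‖⁻¹ • w) • (‖w‖⁻¹ • w)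

/-- The speed profile `V = {f(a)·a : |a| = 1}`. -/
def speedProfile {E : Type*} [NormedAddCommGroup E] [InnerProductSpace ℝ E]
    (f : E → ℝ) : Set E :=
  {v | ∃ a : E, ‖a‖ = 1 ∧ v = f a • a}

/-- The body enclosed by the speed profile. -/
def speedBody {E : Type*} [NormedAddCommGroup E] [InnerProductSpace ℝ E]
    (f : E → ℝ) : Set E :=
  {v | ∃ (a : E) (c : ℝ), ‖a‖ = 1 ∧ 0 ≤ c ∧ c ≤ 1 ∧ v = (c * f a) • a}

/-- `V_s`:  the part of the speed profile spanned with nonnegative coefficients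
by the vertex velocities `v 0, v 1, v 2`. -/
def sectorVs (f : EuclideanSpace ℝ (Fin 3) → ℝ)
    (v : Fin 3 → EuclideanSpace ℝ (Fin 3)) : Set (EuclideanSpace ℝ (Fin 3)) :=
  {w ∈ speedProfile f | ∃ θ : Fin 3 → ℝ, (∀ i, 0 ≤ θ i) ∧ w = ∑ i, θ i • v i}

/-- The planar slice `V^r = {v ∈ V : v = θ₁ v_i + θ₂ v_j, θ₁, θ₂ ≥ 0}`. -/
def sliceV (f : EuclideanSpace ℝ (Fin 3) → ℝ)
    (v : Fin 3 → EuclideanSpace ℝ (Fin 3)) (r : Fin 3) :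
    Set (EuclideanSpace ℝ (Fin 3)) :=
  {w ∈ speedProfile f | ∃ θ : Fin 3 → ℝ, θ r = 0 ∧ (∀ i, 0 ≤ θ i) ∧ w = ∑ i, θ i • v i}

/-- The parallelogram `Π^r = {θ₁ v_i + θ₂ v_j : θ₁, θ₂ ∈ [0,1]}`. -/
def parallelogram (v : Fin 3 → EuclideanSpace ℝ (Fin 3)) (r : Fin 3) :
    Set (EuclideanSpace ℝ (Fin 3)) :=
  {w | ∃ θ : Fin 3 → ℝ, θ r = 0 ∧ (∀ i, 0 ≤ θ i ∧ θ i ≤ 1) ∧ w = ∑ i, θ i • v i}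

/--  The generalized semi-infinite cylinder
`Ψ^r = {θ₁ v_r + θ₂ u : u ∈ V^r, θ₁ ≥ 0, θ₂ ∈ [0,1]}`. -/
def cylinderPsi (f : EuclideanSpace ℝ (Fin 3) → ℝ)
    (v : Fin 3 → EuclideanSpace ℝ (Fin 3)) (r : Fin 3) :
    Set (EuclideanSpace ℝ (Fin 3)) :=
  {w | ∃ (θ₁ θ₂ : ℝ) (u : EuclideanSpace ℝ (Fin 3)),
    u ∈ sliceV f v r ∧ 0 ≤ θ₁ ∧ 0 ≤ θ₂ ∧ θ₂ ≤ 1 ∧ w = θ₁ • v r + θ₂ • u}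

section Helpers

variable {E : Type*} [NormedAddCommGroup E] [InnerProductSpace ℝ E]

lemma aux_unit {w : E} (hw : w ≠ 0) : ‖(‖w‖⁻¹ • w : E)‖ = 1 := by
  rw [norm_smul, norm_inv, norm_norm, inv_mul_cancel₀ (norm_ne_zero_iff.mpr hw)]

lemma slVel_mem {f : E → ℝ} {w : E} (hw : w ≠ 0) : slVel f w ∈ speedProfile f :=
  ⟨_, aux_unit hw, rfl⟩

lemma slCost_pos {f : E → ℝ} (hfpos : ∀ a : E, ‖a‖ = 1 → 0 < f a) {w : E} (hw : w ≠ 0) :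
    0 < slCost f w := div_pos (norm_pos_iff.mpr hw) (hfpos _ (aux_unit hw))

lemma slCost_smul_slVel {f : E → ℝ} (hfpos : ∀ a : E, ‖a‖ = 1 → 0 < f a) {w : E} (hw : w ≠ 0) :
    slCost f w • slVel f w = w := by
  have hfa : f (‖w‖⁻¹ • w) ≠ 0 := (hfpos _ (aux_unit hw)).ne'
  have hn : ‖w‖ ≠ 0 := norm_ne_zero_iff.mpr hw
  unfold slCost slVel
  rw [smul_smul, smul_smul]
  have : ‖w‖ / f (‖w‖⁻¹ • w) * f (‖w‖⁻¹ • w) * ‖w‖⁻¹ = 1 := by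
    rw [div_mul_cancel₀ _ hfa, mul_inv_cancel₀ hn]
  rw [this, one_smul]

lemma slVel_eq_inv_smul {f : E → ℝ} (hfpos : ∀ a : E, ‖a‖ = 1 → 0 < f a) {w : E} (hw : w ≠ 0) :
    slVel f w = (slCost f w)⁻¹ • w := by
  have h := slCost_smul_slVel hfpos hw
  have hC := (slCost_pos hfpos hw).ne'
  calc slVel f w = (slCost f w)⁻¹ • (slCost f w • slVel f w) := by
        rw [smul_smul, inv_mul_cancel₀ hC, one_smul]
    _ = (slCost f w)⁻¹ • w := by rw [h]

lemma profile_sub_body {f : E → ℝ} : speedProfile f ⊆ speedBody f := by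
  rintro w ⟨a, ha, rfl⟩
  exact ⟨a, 1, ha, zero_le_one, le_refl 1, by rw [one_mul]⟩

lemma inner_nhat_pos {f : E → ℝ} (hfpos : ∀ a : E, ‖a‖ = 1 → 0 < f a)
    {nhat : E → E} (hnhat0 : ∀ w ∈ speedProfile f, nhat w ≠ 0)
    (hout : ∀ w ∈ speedProfile f, ∀ v ∈ speedBody f, ⟪v - w, nhat w⟫ ≤ 0)
    {w : E} (hw : w ∈ speedProfile f) : 0 < ⟪w, nhat w⟫ := by
  set n := nhat w with hn
  have hn0 : n ≠ 0 := hnhat0 w hw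
  set a : E := ‖n‖⁻¹ • n with ha
  have hau : ‖a‖ = 1 := aux_unit hn0
  have hv : f a • a ∈ speedBody f := profile_sub_body ⟨a, hau, rfl⟩
  have h := hout w hw _ hv
  rw [inner_sub_left, sub_nonpos] at h
  have hva : ⟪f a • a, n⟫ = f a * ‖n‖ := by
    rw [real_inner_smul_left, ha, real_inner_smul_left, real_inner_self_eq_norm_sq]
    field_simp [norm_ne_zero_iff.mpr hn0]
  calc (0:ℝ) < f a * ‖n‖ := mul_pos (hfpos a hau) (norm_pos_iff.mpr hn0)
    _ = ⟪f a • a, n⟫ := hva.symm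
    _ ≤ ⟪w, n⟫ := h

lemma sum_split (θ : Fin 3 → ℝ) (v : Fin 3 → E) (r : Fin 3) :
    ∑ i, θ i • v i = θ r • v r + ∑ i, (if i = r then (0:ℝ) else θ i) • v i := by
  rw [← Finset.add_sum_erase _ (fun i => θ i • v i) (Finset.mem_univ r),
      ← Finset.add_sum_erase _ (fun i => (if i = r then (0:ℝ) else θ i) • v i)
        (Finset.mem_univ r),
      if_pos rfl, zero_smul, zero_add]
  congr 1
  exact Finset.sum_congr rfl fun i hi => by rw [if_neg (Finset.ne_of_mem_erase hi)]

lemma inner_sum_smul (c : Fin 3 → ℝ) (u : Fin 3 → E) (n : E) :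
    ⟪∑ i, c i • u i, n⟫ = ∑ i, c i * ⟪u i, n⟫ := by
  rw [sum_inner]
  exact Finset.sum_congr rfl fun i _ => real_inner_smul_left _ _ _

end Helpers

section Parts

variable {f : EuclideanSpace ℝ (Fin 3) → ℝ}
  {nhat : EuclideanSpace ℝ (Fin 3) → EuclideanSpace ℝ (Fin 3)}

lemma part1 (hfpos : ∀ a : EuclideanSpace ℝ (Fin 3), ‖a‖ = 1 → 0 < f a)
    (hnhat0 : ∀ w ∈ speedProfile f, nhat w ≠ 0)
    (hout : ∀ w ∈ speedProfile f, ∀ v ∈ speedBody f, ⟪v - w, nhat w⟫ ≤ 0)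
    (v : Fin 3 → EuclideanSpace ℝ (Fin 3)) (hvP : ∀ j, v j ∈ speedProfile f)
    (h1 : ∀ i j, 0 ≤ ⟪v i, nhat (v j)⟫) (r : Fin 3) :
    sliceV f v r ⊆ parallelogram v r := by
  rintro w ⟨hwV, θ, hθr, hθnn, hsum⟩
  refine ⟨θ, hθr, fun s => ⟨hθnn s, ?_⟩, hsum⟩
  by_cases hs : s = r
  · rw [hs, hθr]; exact zero_le_one
  · set n := nhat (v s) with hn
    have hpos : 0 < ⟪v s, n⟫ := inner_nhat_pos hfpos hnhat0 hout (hvP s)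
    have hb : ⟪w - v s, n⟫ ≤ 0 := hout _ (hvP s) _ (profile_sub_body hwV)
    rw [inner_sub_left, sub_nonpos] at hb
    have hw : ⟪w, n⟫ = ∑ i, θ i * ⟪v i, n⟫ := by rw [hsum, inner_sum_smul]
    have hsingle : θ s * ⟪v s, n⟫ ≤ ∑ i, θ i * ⟪v i, n⟫ :=
      Finset.single_le_sum (fun i _ => mul_nonneg (hθnn i) (h1 i s)) (Finset.mem_univ s)
    nlinarith

lemma part2 (hfpos : ∀ a : EuclideanSpace ℝ (Fin 3), ‖a‖ = 1 → 0 < f a)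
    (hnhat0 : ∀ w ∈ speedProfile f, nhat w ≠ 0)
    (hout : ∀ w ∈ speedProfile f, ∀ v ∈ speedBody f, ⟪v - w, nhat w⟫ ≤ 0)
    (v : Fin 3 → EuclideanSpace ℝ (Fin 3)) (hvP : ∀ j, v j ∈ speedProfile f)
    (r : Fin 3) (h2 : ∀ w ∈ sliceV f v r, 0 ≤ ⟪v r, nhat w⟫) :
    sectorVs f v ⊆ cylinderPsi f v r := by
  rintro w ⟨hwV, θ, hθnn, hsum⟩
  set θ' : Fin 3 → ℝ := fun i => if i = r then 0 else θ i with hθ'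
  have hθ'nn : ∀ i, 0 ≤ θ' i := fun i => by
    by_cases h : i = r <;> simp [hθ', h, hθnn i]
  set p : EuclideanSpace ℝ (Fin 3) := ∑ i, θ' i • v i with hp
  have hw' : w = θ r • v r + p := by rw [hsum, sum_split]
  by_cases hp0 : p = 0
  · obtain ⟨i, hi⟩ : ∃ i : Fin 3, i ≠ r := by
      rcases eq_or_ne r 0 with h | h
      · exact ⟨1, by simp [h]⟩
      · exact ⟨0, Ne.symm h⟩
    refine ⟨θ r, 0, v i, ⟨hvP i, fun t => if t = i then 1 else 0, if_neg (Ne.symm hi),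
        fun t => by dsimp only; split <;> norm_num, by simp⟩, hθnn r, le_refl 0, zero_le_one, ?_⟩
    rw [hw', hp0, zero_smul]
  · have hC : 0 < slCost f p := slCost_pos hfpos hp0
    set u := slVel f p with hu
    have hpu : slCost f p • u = p := slCost_smul_slVel hfpos hp0
    have huP : u ∈ speedProfile f := slVel_mem hp0
    have huS : u ∈ sliceV f v r := by
      refine ⟨huP, fun i => (slCost f p)⁻¹ * θ' i, by simp [hθ'],
        fun i => mul_nonneg (inv_nonneg.mpr hC.le) (hθ'nn i), ?_⟩
      rw [hu, slVel_eq_inv_smul hfpos hp0, hp, Finset.smul_sum]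
      exact Finset.sum_congr rfl fun i _ => by rw [smul_smul]
    have hA : 0 < ⟪u, nhat u⟫ := inner_nhat_pos hfpos hnhat0 hout huP
    have hb : ⟪w - u, nhat u⟫ ≤ 0 := hout u huP w (profile_sub_body hwV)
    rw [inner_sub_left, sub_nonpos] at hb
    have h2' := h2 u huS
    have hwinner : ⟪w, nhat u⟫ = θ r * ⟪v r, nhat u⟫ + slCost f p * ⟪u, nhat u⟫ := by
      rw [hw', inner_add_left, real_inner_smul_left]
      congr 1
      conv_lhs => rw [← hpu, real_inner_smul_left]
    have hCle : slCost f p ≤ 1 := by nlinarith [mul_nonneg (hθnn r) h2']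
    exact ⟨θ r, slCost f p, u, huS, hθnn r, hC.le, hCle, by rw [hw', hpu]⟩

end Parts

section MC

variable {f : EuclideanSpace ℝ (Fin 3) → ℝ}
  {nhat : EuclideanSpace ℝ (Fin 3) → EuclideanSpace ℝ (Fin 3)}
  {z : Fin 3 → EuclideanSpace ℝ (Fin 3)}

lemma mc_interior (hz : LinearIndependent ℝ z)
    (hfpos : ∀ a : EuclideanSpace ℝ (Fin 3), ‖a‖ = 1 → 0 < f a)
    (hnhat0 : ∀ w ∈ speedProfile f, nhat w ≠ 0)
    (hout : ∀ w ∈ speedProfile f, ∀ v ∈ speedBody f, ⟪v - w, nhat w⟫ ≤ 0)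
    (h2 : ∀ r : Fin 3, ∀ w ∈ sliceV f (fun j => slVel f (z j)) r,
      0 ≤ ⟪slVel f (z r), nhat w⟫)
    (ξ : Fin 3 → ℝ) (hξpos : ∀ j, 0 < ξ j) (hξsum : ∑ j, ξ j = 1) (r : Fin 3) :
    (1 - ξ r) * slCost f (∑ j, (if j = r then 0 else ξ j / (1 - ξ r)) • z j) ≤
      slCost f (∑ j, ξ j • z j) := by
  have hind := Fintype.linearIndependent_iff.mp hz
  obtain ⟨i, hi⟩ : ∃ i : Fin 3, i ≠ r := by
    rcases eq_or_ne r 0 with h | h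
    · exact ⟨1, by simp [h]⟩
    · exact ⟨0, Ne.symm h⟩
  have h1r : 0 < 1 - ξ r := by
    have hsplit := Finset.add_sum_erase Finset.univ ξ (Finset.mem_univ r)
    have hle : ξ i ≤ ∑ j ∈ Finset.univ.erase r, ξ j :=
      Finset.single_le_sum (fun j _ => (hξpos j).le)
        (Finset.mem_erase.mpr ⟨hi, Finset.mem_univ i⟩)
    have := hξpos i
    linarith
  set g : Fin 3 → ℝ := fun j => if j = r then 0 else ξ j / (1 - ξ r) with hg
  have hgnn : ∀ j, 0 ≤ g j := fun j => by
    by_cases h : j = r <;> simp [hg, h, le_of_lt (div_pos (hξpos j) h1r)]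
  set x : EuclideanSpace ℝ (Fin 3) := ∑ j, ξ j • z j with hxdef
  set y : EuclideanSpace ℝ (Fin 3) := ∑ j, g j • z j with hydef
  have hx0 : x ≠ 0 := fun h => absurd (hind ξ h i) (hξpos i).ne'
  have hy0 : y ≠ 0 := fun h =>
    absurd (hind g h i) (by simp [hg, if_neg hi, (div_pos (hξpos i) h1r).ne'])
  have hxsplit : x = ξ r • z r + (1 - ξ r) • y := by
    rw [hxdef, sum_split ξ z r, hydef, Finset.smul_sum]
    congr 1
    refine Finset.sum_congr rfl fun j _ => ?_
    rw [smul_smul]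
    congr 1
    by_cases hj : j = r
    · simp [hg, hj]
    · rw [hg]; simp only [if_neg hj]
      rw [mul_comm, div_mul_cancel₀ _ h1r.ne']
  have hzr := slCost_smul_slVel hfpos (hz.ne_zero r)
  have hyv := slCost_smul_slVel hfpos hy0
  have hxv := slCost_smul_slVel hfpos hx0
  set n := nhat (slVel f y) with hn
  have hvyS : slVel f y ∈ sliceV f (fun j => slVel f (z j)) r := by
    refine ⟨slVel_mem hy0, fun j => (slCost f y)⁻¹ * (g j * slCost f (z j)),
      by simp [hg], fun j => mul_nonneg (inv_nonneg.mpr (slCost_pos hfpos hy0).le)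
        (mul_nonneg (hgnn j) (slCost_pos hfpos (hz.ne_zero j)).le), ?_⟩
    rw [slVel_eq_inv_smul hfpos hy0, hydef, Finset.smul_sum]
    refine Finset.sum_congr rfl fun j _ => ?_
    have hzj : g j • z j = (g j * slCost f (z j)) • slVel f (z j) := by
      rw [← smul_smul]
      exact congrArg _ (slCost_smul_slVel hfpos (hz.ne_zero j)).symm
    rw [hzj, smul_smul]
  have hA : 0 < ⟪slVel f y, n⟫ := inner_nhat_pos hfpos hnhat0 hout (slVel_mem hy0)
  have hB : 0 ≤ ⟪slVel f (z r), n⟫ := h2 r _ hvyS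
  have hb : ⟪slVel f x - slVel f y, n⟫ ≤ 0 :=
    hout _ (slVel_mem hy0) _ (profile_sub_body (slVel_mem hx0))
  rw [inner_sub_left, sub_nonpos] at hb
  have ix : ⟪x, n⟫ = slCost f x * ⟪slVel f x, n⟫ := by
    conv_lhs => rw [← hxv, real_inner_smul_left]
  have iy : ⟪y, n⟫ = slCost f y * ⟪slVel f y, n⟫ := by
    conv_lhs => rw [← hyv, real_inner_smul_left]
  have izr : ⟪z r, n⟫ = slCost f (z r) * ⟪slVel f (z r), n⟫ := by
    conv_lhs => rw [← hzr, real_inner_smul_left]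
  have e1 : slCost f x * ⟪slVel f x, n⟫ =
      ξ r * (slCost f (z r) * ⟪slVel f (z r), n⟫) +
        (1 - ξ r) * (slCost f y * ⟪slVel f y, n⟫) := by
    rw [← ix, hxsplit, inner_add_left, real_inner_smul_left, real_inner_smul_left, izr, iy]
  have hCx : 0 < slCost f x := slCost_pos hfpos hx0
  have hCr : 0 < slCost f (z r) := slCost_pos hfpos (hz.ne_zero r)
  have key : (1 - ξ r) * slCost f y * ⟪slVel f y, n⟫ ≤ slCost f x * ⟪slVel f y, n⟫ := by
    nlinarith [mul_le_mul_of_nonneg_left hb hCx.le,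
      mul_nonneg (mul_nonneg (hξpos r).le hCr.le) hB]
  exact le_of_mul_le_mul_right key hA

lemma mc_boundary (hz : LinearIndependent ℝ z)
    (hfpos : ∀ a : EuclideanSpace ℝ (Fin 3), ‖a‖ = 1 → 0 < f a)
    (hnhat0 : ∀ w ∈ speedProfile f, nhat w ≠ 0)
    (hout : ∀ w ∈ speedProfile f, ∀ v ∈ speedBody f, ⟪v - w, nhat w⟫ ≤ 0)
    (h1 : ∀ i j : Fin 3, 0 ≤ ⟪slVel f (z i), nhat (slVel f (z j))⟫)
    (ξ : Fin 3 → ℝ) (hξnn : ∀ j, 0 ≤ ξ j) (i : Fin 3) (hξi : 0 < ξ i) :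
    ξ i * slCost f (z i) ≤ slCost f (∑ j, ξ j • z j) := by
  have hind := Fintype.linearIndependent_iff.mp hz
  set x : EuclideanSpace ℝ (Fin 3) := ∑ j, ξ j • z j with hxdef
  have hx0 : x ≠ 0 := fun h => absurd (hind ξ h i) hξi.ne'
  have hxv := slCost_smul_slVel hfpos hx0
  set n := nhat (slVel f (z i)) with hn
  have hA : 0 < ⟪slVel f (z i), n⟫ :=
    inner_nhat_pos hfpos hnhat0 hout (slVel_mem (hz.ne_zero i))
  have hb : ⟪slVel f x - slVel f (z i), n⟫ ≤ 0 :=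
    hout _ (slVel_mem (hz.ne_zero i)) _ (profile_sub_body (slVel_mem hx0))
  rw [inner_sub_left, sub_nonpos] at hb
  have ix : ⟪x, n⟫ = slCost f x * ⟪slVel f x, n⟫ := by
    conv_lhs => rw [← hxv, real_inner_smul_left]
  have ix2 : ⟪x, n⟫ = ∑ j, (ξ j * slCost f (z j)) * ⟪slVel f (z j), n⟫ := by
    have : x = ∑ j, (ξ j * slCost f (z j)) • slVel f (z j) := by
      rw [hxdef]
      refine Finset.sum_congr rfl fun j _ => ?_
      rw [← smul_smul]
      exact congrArg _ (slCost_smul_slVel hfpos (hz.ne_zero j)).symm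
    rw [this, inner_sum_smul]
  have hsingle : (ξ i * slCost f (z i)) * ⟪slVel f (z i), n⟫ ≤
      ∑ j, (ξ j * slCost f (z j)) * ⟪slVel f (z j), n⟫ :=
    Finset.single_le_sum (fun j _ => mul_nonneg
      (mul_nonneg (hξnn j) (slCost_pos hfpos (hz.ne_zero j)).le) (h1 j i))
      (Finset.mem_univ i)
  have hCx : 0 < slCost f x := slCost_pos hfpos hx0
  have key : (ξ i * slCost f (z i)) * ⟪slVel f (z i), n⟫ ≤
      slCost f x * ⟪slVel f (z i), n⟫ := by
    nlinarith [mul_le_mul_of_nonneg_left hb hCx.le]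
  exact le_of_mul_le_mul_right key hA

end MC

/-- Normal MC verification in 3D.
If the speed profile is convex and smooth, with outward normal `n̂(ṽ)` at each
boundary point, and (1) `v_i·n̂(v_j) ≥ 0` for all `i,j`, and (2) `v_r·n̂(ṽ) ≥ 0`
for every `r` and every `ṽ ∈ V^r`, then `V^r ⊆ Π^r` and `V_s ⊆ Ψ^r` for all `r`;
consequently the simplex `(x = 0, z₁, z₂, z₃)` is monotone causal. -/
theorem stmt11 (z : Fin 3 → EuclideanSpace ℝ (Fin 3))
    (hz : LinearIndependent ℝ z)
    (f : EuclideanSpace ℝ (Fin 3) → ℝ)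
    (hfc : ContinuousOn f (Metric.sphere (0 : EuclideanSpace ℝ (Fin 3)) 1))
    (hfpos : ∀ a : EuclideanSpace ℝ (Fin 3), ‖a‖ = 1 → 0 < f a)
    (hVconv : Convex ℝ (speedBody f))
    (nhat : EuclideanSpace ℝ (Fin 3) → EuclideanSpace ℝ (Fin 3))
    (hnhat0 : ∀ w ∈ speedProfile f, nhat w ≠ 0)
    (hout : ∀ w ∈ speedProfile f, ∀ v ∈ speedBody f, ⟪v - w, nhat w⟫ ≤ 0)
    (h1 : ∀ i j : Fin 3, 0 ≤ ⟪slVel f (z i), nhat (slVel f (z j))⟫)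
    (h2 : ∀ r : Fin 3, ∀ w ∈ sliceV f (fun j => slVel f (z j)) r,
      0 ≤ ⟪slVel f (z r), nhat w⟫) :
    (∀ r : Fin 3, sliceV f (fun j => slVel f (z j)) r ⊆
      parallelogram (fun j => slVel f (z j)) r) ∧
    (∀ r : Fin 3, sectorVs f (fun j => slVel f (z j)) ⊆
      cylinderPsi f (fun j => slVel f (z j)) r) ∧
    ((∀ ξ : Fin 3 → ℝ, (∀ j, 0 < ξ j) → ∑ j, ξ j = 1 →
      ∀ r : Fin 3,
        (1 - ξ r) *
            slCost f (∑ j, (if j = r then 0 else ξ j / (1 - ξ r)) • z j) ≤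
          slCost f (∑ j, ξ j • z j)) ∧
    (∀ ξ : Fin 3 → ℝ, (∀ j, 0 ≤ ξ j) → ∑ j, ξ j = 1 →
      ∀ r : Fin 3, ξ r = 0 → (∀ i, i ≠ r → 0 < ξ i) →
        ∀ i, i ≠ r → ξ i * slCost f (z i) ≤ slCost f (∑ j, ξ j • z j))) := by
  have hvP : ∀ j, (fun j => slVel f (z j)) j ∈ speedProfile f :=
    fun j => slVel_mem (hz.ne_zero j)
  exact ⟨fun r => part1 hfpos hnhat0 hout _ hvP h1 r,
    fun r => part2 hfpos hnhat0 hout _ hvP r (h2 r),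
    fun ξ hp hs r => mc_interior hz hfpos hnhat0 hout h2 ξ hp hs r,
    fun ξ hnn hs r hr hpos i hir =>
      mc_boundary hz hfpos hnhat0 hout h1 ξ hnn i (hpos i hir)⟩
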